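/- For every positive integer m, Σ_{k=1}^{Ω(m)} (−1)^k α_k(m) equals (−1)^{Ω(m)} if m is squarefree and m > 1, and equals 0 otherwise (in particular it is 0 for m = 1, where the sum is empty). -/

import Mathlib

/-- `alpha k m` is the number of `k`-tuples `(m₁, …, m_k)` of integers, each `≥ 2`,
whose product is `m`. -/
noncomputable def alpha (k m : ℕ) : ℕ :=
  Nat.card {f : Fin k → ℕ // (∀ i, 2 ≤ f i) ∧ ∏ i, f i = m}

/-- `Omega m` is the number of prime factors of `m` counted with multiplicity. -/
def Omega (m : ℕ) : ℕ := m.primeFactorsList.length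

/-!
Splitting off the first factor gives `α_{k+1}(m) = ∑_{d ∣ m, d < m} α_k(d)`, i.e.
`∑_{d ∣ m} α_k(d) = α_k(m) + α_{k+1}(m)`. Hence the full alternating sum
`A(m) = ∑_{k ≥ 0} (-1)^k α_k(m)` telescopes under divisor summation, `∑_{d ∣ m} A(d) = α_0(m) = [m = 1]`,
so `A = μ` by Möbius inversion. The sum in the theorem omits the term `α_0(m) = [m = 1]`, so it equals
`μ(m) - [m = 1]`.
-/

open ArithmeticFunction
open scoped ArithmeticFunction.Moebius ArithmeticFunction.Omega ArithmeticFunction.zeta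

theorem Nat.mem_properDivisors_of_mul_eq {a d m : ℕ} (ha : 2 ≤ a) (h : a * d = m) (hm : m ≠ 0) :
    d ∈ m.properDivisors := by
  subst h
  exact Nat.mem_properDivisors.2
    ⟨dvd_mul_left d a, lt_mul_of_one_lt_left (Nat.pos_of_ne_zero (right_ne_zero_of_mul hm)) ha⟩

theorem Nat.two_le_div_of_mem_properDivisors {d m : ℕ} (hd : d ∈ m.properDivisors) : 2 ≤ m / d := by
  obtain ⟨⟨e, rfl⟩, hlt⟩ := Nat.mem_properDivisors.1 hd
  rw [Nat.mul_div_cancel_left _ (Nat.pos_of_mem_properDivisors hd)]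
  exact one_lt_of_lt_mul_right hlt

namespace ArithmeticFunction

theorem cardFactors_le_of_dvd {a b : ℕ} (h : a ∣ b) (hb : b ≠ 0) : Ω a ≤ Ω b := by
  obtain ⟨c, rfl⟩ := h
  rw [cardFactors_mul (left_ne_zero_of_mul hb) (right_ne_zero_of_mul hb)]
  exact Nat.le_add_right _ _

theorem cardFactors_lt_of_mem_properDivisors {d m : ℕ} (hd : d ∈ m.properDivisors) : Ω d < Ω m := by
  obtain ⟨⟨e, rfl⟩, hlt⟩ := Nat.mem_properDivisors.1 hd
  have hd0 := (Nat.pos_of_mem_properDivisors hd).ne'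
  rw [cardFactors_mul hd0 (by rintro rfl; simp at hlt)]
  simpa using cardFactors_pos_iff_one_lt.2 (one_lt_of_lt_mul_right hlt)

theorem sum_divisors_moebius (n : ℕ) : ∑ d ∈ n.divisors, (μ d : ℤ) = if n = 1 then 1 else 0 := by
  rw [← coe_mul_zeta_apply, moebius_mul_coe_zeta, one_apply]

theorem eq_moebius_of_sum_divisors_eq_on {f : ℕ → ℤ} (s : Set ℕ)
    (hs : ∀ a b, a ∣ b → b ∈ s → a ∈ s)
    (hf : ∀ n > 0, n ∈ s → ∑ d ∈ n.divisors, f d = if n = 1 then 1 else 0)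
    {n : ℕ} (hn : 0 < n) (hns : n ∈ s) : f n = μ n := by
  rw [← (sum_eq_iff_sum_mul_moebius_eq_on s hs).1 hf n hn hns,
    (sum_eq_iff_sum_mul_moebius_eq_on s hs).1 (fun n _ _ => sum_divisors_moebius n) n hn hns]

end ArithmeticFunction

abbrev OrderedFactorization (k m : ℕ) : Type :=
  {f : Fin k → ℕ // (∀ i, 2 ≤ f i) ∧ ∏ i, f i = m}

namespace OrderedFactorization

variable {k m : ℕ}

theorem ne_zero (f : OrderedFactorization k m) : m ≠ 0 :=
  f.2.2 ▸ Finset.prod_ne_zero_iff.2 fun i _ => by have := f.2.1 i; omega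

instance : Finite (OrderedFactorization k m) :=
  Finite.of_injective (β := Nat.finMulAntidiag k m)
    (fun f => ⟨f.1, Nat.mem_finMulAntidiag.2 ⟨f.2.2, f.ne_zero⟩⟩)
    fun _ _ h => Subtype.ext (congrArg Subtype.val h :)

theorem head_mul_prod_tail (f : OrderedFactorization (k + 1) m) :
    f.1 0 * ∏ i, Fin.tail f.1 i = m :=
  (Fin.prod_univ_succ f.1).symm.trans f.2.2

theorem prod_tail_mem_properDivisors (f : OrderedFactorization (k + 1) m) :
    ∏ i, Fin.tail f.1 i ∈ m.properDivisors :=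
  Nat.mem_properDivisors_of_mul_eq (f.2.1 0) f.head_mul_prod_tail f.ne_zero

def succEquiv : OrderedFactorization (k + 1) m ≃ Σ d : m.properDivisors, OrderedFactorization k d where
  toFun f := ⟨⟨_, f.prod_tail_mem_properDivisors⟩, ⟨Fin.tail f.1, fun i => f.2.1 _, rfl⟩⟩
  invFun p := ⟨Fin.cons (m / p.1) p.2.1, by
    refine ⟨Fin.cases (Nat.two_le_div_of_mem_properDivisors p.1.2) p.2.2.1, ?_⟩
    rw [Fin.prod_univ_succ, Fin.cons_zero]
    simp only [Fin.cons_succ]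
    rw [p.2.2.2, Nat.div_mul_cancel (Nat.mem_properDivisors.1 p.1.2).1]⟩
  left_inv f := by
    refine Subtype.ext (Eq.trans ?_ (Fin.cons_self_tail f.1))
    show Fin.cons (m / ∏ i, Fin.tail f.1 i) (Fin.tail f.1) = _
    rw [Nat.div_eq_of_eq_mul_left (Nat.pos_of_mem_properDivisors f.prod_tail_mem_properDivisors)
      f.head_mul_prod_tail.symm]
  right_inv p := Sigma.subtype_ext (Subtype.ext p.2.2.2) rfl

end OrderedFactorization

open OrderedFactorization

theorem alpha_succ (k m : ℕ) : alpha (k + 1) m = ∑ d ∈ m.properDivisors, alpha k d := by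
  rw [alpha, Nat.card_congr succEquiv, Nat.card_sigma]
  exact Finset.sum_coe_sort m.properDivisors (fun d => alpha k d)

theorem alpha_zero_left (m : ℕ) : alpha 0 m = if m = 1 then 1 else 0 := by
  split_ifs with h
  · subst h
    exact Nat.card_eq_one_iff_unique.2 ⟨inferInstance, ⟨⟨finZeroElim, finZeroElim, rfl⟩⟩⟩
  · have : IsEmpty (OrderedFactorization 0 m) :=
      ⟨fun f => h (f.2.2.symm.trans Finset.prod_empty)⟩
    exact Nat.card_of_isEmpty

theorem alpha_eq_zero_of_cardFactors_lt {k m : ℕ} (h : Ω m < k) : alpha k m = 0 := by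
  induction k generalizing m with
  | zero => omega
  | succ k ih =>
    rw [alpha_succ]
    exact Finset.sum_eq_zero fun d hd => ih (by have := cardFactors_lt_of_mem_properDivisors hd; omega)

theorem sum_divisors_alpha (k : ℕ) {m : ℕ} (hm : m ≠ 0) :
    ∑ d ∈ m.divisors, alpha k d = alpha k m + alpha (k + 1) m := by
  rw [← Nat.cons_self_properDivisors hm, Finset.sum_cons, alpha_succ]

open Finset in
theorem sum_divisors_sum_range_alpha {N m : ℕ} (hm : m ≠ 0) (hN : Ω m < N) :
    ∑ d ∈ m.divisors, ∑ k ∈ range N, (-1 : ℤ) ^ k * alpha k d = if m = 1 then 1 else 0 := by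
  rw [sum_comm]
  calc ∑ k ∈ range N, ∑ d ∈ m.divisors, (-1 : ℤ) ^ k * alpha k d
      = ∑ k ∈ range N, ((-1 : ℤ) ^ k * alpha k m - (-1) ^ (k + 1) * alpha (k + 1) m) := by
        refine sum_congr rfl fun k _ => ?_
        rw [← mul_sum, ← Nat.cast_sum, sum_divisors_alpha k hm]
        push_cast
        ring
    _ = (-1) ^ 0 * alpha 0 m - (-1) ^ N * alpha N m :=
        sum_range_sub' (fun k => (-1 : ℤ) ^ k * alpha k m) N
    _ = if m = 1 then 1 else 0 := by
        rw [alpha_eq_zero_of_cardFactors_lt hN, alpha_zero_left]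
        split_ifs <;> simp

theorem sum_range_alpha_eq_moebius {N m : ℕ} (hm : 0 < m) (hN : Ω m < N) :
    ∑ k ∈ Finset.range N, (-1 : ℤ) ^ k * alpha k m = μ m :=
  eq_moebius_of_sum_divisors_eq_on (f := fun n => ∑ k ∈ Finset.range N, (-1 : ℤ) ^ k * alpha k n)
    {n | n ≠ 0 ∧ Ω n < N}
    (fun _ _ hab hb =>
      ⟨ne_zero_of_dvd_ne_zero hb.1 hab, (cardFactors_le_of_dvd hab hb.1).trans_lt hb.2⟩)
    (fun _ _ hn => sum_divisors_sum_range_alpha hn.1 hn.2) hm ⟨hm.ne', hN⟩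

theorem Omega_eq_cardFactors (m : ℕ) : Omega m = Ω m := cardFactors_apply.symm

theorem stmt7 (m : ℕ) (hm : 0 < m) :
    ∑ k ∈ Finset.Icc 1 (Omega m), (-1 : ℤ) ^ k * (alpha k m : ℤ)
      = if Squarefree m ∧ 1 < m then (-1 : ℤ) ^ (Omega m) else 0 := by
  have h := sum_range_alpha_eq_moebius hm (Nat.lt_succ_self (Ω m))
  rw [Nat.range_succ_eq_Icc_zero, ← Finset.add_sum_Ioc_eq_sum_Icc (Nat.zero_le _),
    ← Finset.Icc_add_one_left_eq_Ioc, zero_add, alpha_zero_left] at h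
  rw [Omega_eq_cardFactors, eq_sub_of_add_eq' h]
  rcases (Nat.one_le_iff_ne_zero.2 hm.ne').eq_or_lt with rfl | h1
  · simp
  · by_cases hsq : Squarefree m
    · simp [hsq, h1, h1.ne', moebius_apply_of_squarefree hsq]
    · simp [hsq, h1.ne', moebius_eq_zero_of_not_squarefree hsq]
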